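/- Every sequence S over {O,U} of even length can be transformed, by finitely many reductions (deletions of two consecutive equal letters OO or UU), into an alternating sequence T (one in which no two consecutive letters are equal) with Φ(T) = Φ(S); this alternating sequence T has even length equal to 2·|Φ(S)|. -/

import Mathlib

/-- The two-letter alphabet {O, U}. -/
inductive OULetter : Type
  | O : OULetter
  | U : OULetter
deriving DecidableEq

open OULetter

/-- The sign `ε` of the letter `X` at the (1-indexed) position `i`:
`+1` if (`X = O` and `i` is even) or (`X = U` and `i` is odd), and `-1` otherwise. -/
def eps (X : OULetter) (i : ℕ) : ℤ :=
  match X with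
  | O => if i % 2 = 0 then 1 else -1
  | U => if i % 2 = 1 then 1 else -1

/-- The sign sum `Σ_{i=1}^m ε(X_i)` of a sequence `S = X₁X₂…X_m`. -/
def signSum (S : List OULetter) : ℤ :=
  ∑ j : Fin S.length, eps (S.get j) (j.1 + 1)

/-- The OU number `Φ(S) = (1/2)·Σ_{i=1}^m ε(X_i)` of a sequence `S`. -/
def Phi (S : List OULetter) : ℚ := (signSum S : ℚ) / 2


/-- A single reduction step: deleting two consecutive equal letters. -/
def Reduces (S S' : List OULetter) : Prop :=
  ∃ (A B : List OULetter) (X : OULetter), S = A ++ [X, X] ++ B ∧ S' = A ++ B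

/-!
Shifting a word by one position flips every sign, so `signSum (X :: S) = ε(X, 1) - signSum S`.
Hence deleting `XX` leaves the sign sum unchanged, while in an alternating word consecutive
letters carry equal signs, so its sign sum is `± length`. Deleting equal neighbours while
there are any shortens the word, so this terminates at an alternating word.
-/

lemma eps_succ (X : OULetter) (i : ℕ) : eps X (i + 1) = -eps X i := by
  rcases Nat.mod_two_eq_zero_or_one i with h | h <;> cases X <;> simp [eps, Nat.add_mod, h]

lemma eps_one_of_ne {X Y : OULetter} (h : X ≠ Y) : eps Y 1 = -eps X 1 := by
  cases X <;> cases Y <;> simp_all [eps]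

lemma abs_eps (X : OULetter) (i : ℕ) : |eps X i| = 1 := by
  cases X <;> unfold eps <;> split_ifs <;> simp

@[simp]
lemma signSum_nil : signSum [] = 0 := rfl

lemma signSum_cons (X : OULetter) (S : List OULetter) :
    signSum (X :: S) = eps X 1 - signSum S := by
  have shift (j : Fin S.length) :
      eps ((X :: S).get j.succ) (j.succ + 1) = -eps (S.get j) (j + 1) := eps_succ _ _
  simp only [signSum, List.length_cons, Fin.sum_univ_succ, shift, Finset.sum_neg_distrib]
  rfl

lemma signSum_append_pair (A B : List OULetter) (X : OULetter) :
    signSum (A ++ [X, X] ++ B) = signSum (A ++ B) := by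
  induction A with
  | nil => simp [signSum_cons]
  | cons Y A ih => simp only [List.cons_append, signSum_cons, ih]

lemma Reduces.signSum_eq {S S' : List OULetter} (h : Reduces S S') : signSum S' = signSum S := by
  obtain ⟨A, B, X, rfl, rfl⟩ := h
  exact (signSum_append_pair A B X).symm

lemma signSum_eq_of_reflTransGen {S T : List OULetter} (h : Relation.ReflTransGen Reduces S T) :
    signSum T = signSum S :=
  Relation.ReflTransGen.head_induction_on h rfl fun hstep _ ih => ih.trans hstep.signSum_eq

lemma signSum_cons_of_isChain {X : OULetter} {S : List OULetter}
    (h : (X :: S).IsChain (· ≠ ·)) : signSum (X :: S) = eps X 1 * (S.length + 1) := by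
  induction S generalizing X with
  | nil => simp [signSum_cons]
  | cons Y S ih =>
    rw [List.isChain_cons_cons] at h
    rw [signSum_cons, ih h.2, eps_one_of_ne h.1, List.length_cons]
    push_cast
    ring

lemma abs_signSum_of_isChain {S : List OULetter} (h : S.IsChain (· ≠ ·)) :
    |signSum S| = S.length := by
  cases S with
  | nil => simp
  | cons X S =>
    rw [signSum_cons_of_isChain h, abs_mul, abs_eps, one_mul, List.length_cons]
    exact abs_of_nonneg (by positivity)

lemma List.exists_eq_append_pair_of_not_isChain_ne {α : Type*} {l : List α}
    (h : ¬ l.IsChain (· ≠ ·)) : ∃ A B x, l = A ++ [x, x] ++ B := by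
  induction l with
  | nil => exact absurd List.isChain_nil h
  | cons x l ih =>
    cases l with
    | nil => exact absurd (List.isChain_singleton x) h
    | cons y l =>
      by_cases hxy : x = y
      · exact ⟨[], l, x, by simp [hxy]⟩
      · obtain ⟨A, B, z, hl⟩ := ih fun hc => h (List.isChain_cons_cons.mpr ⟨hxy, hc⟩)
        exact ⟨x :: A, B, z, by simp [hl]⟩

lemma exists_reflTransGen_isChain (S : List OULetter) :
    ∃ T, Relation.ReflTransGen Reduces S T ∧ T.IsChain (· ≠ ·) := by
  by_cases hS : S.IsChain (· ≠ ·)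
  · exact ⟨S, .refl, hS⟩
  obtain ⟨A, B, X, rfl⟩ := List.exists_eq_append_pair_of_not_isChain_ne hS
  obtain ⟨T, hT, hchain⟩ := exists_reflTransGen_isChain (A ++ B)
  exact ⟨T, .head ⟨A, B, X, rfl, rfl⟩ hT, hchain⟩
termination_by S.length
decreasing_by subst_vars; simp only [List.length_append, List.length_cons]; omega

theorem exists_alternating_reduct_general (S : List OULetter) :
    ∃ T : List OULetter, Relation.ReflTransGen Reduces S T ∧
      T.Chain' (· ≠ ·) ∧ Phi T = Phi S ∧ (T.length : ℚ) = 2 * |Phi S| := by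
  obtain ⟨T, hST, hT⟩ := exists_reflTransGen_isChain S
  have hPhi : Phi T = Phi S := by rw [Phi, Phi, signSum_eq_of_reflTransGen hST]
  refine ⟨T, hST, hT, hPhi, ?_⟩
  rw [← hPhi, Phi, abs_div, ← Int.cast_abs, abs_signSum_of_isChain hT]
  push_cast
  ring

/-- Every sequence of even length reduces, by finitely many reductions, to an alternating
sequence T with the same OU number, whose length is twice the absolute value of it. -/
theorem exists_alternating_reduct (S : List OULetter) (heven : Even S.length) :
    ∃ T : List OULetter, Relation.ReflTransGen Reduces S T ∧
      T.Chain' (· ≠ ·) ∧ Phi T = Phi S ∧ (T.length : ℚ) = 2 * |Phi S| :=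
  exists_alternating_reduct_general S
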